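/- arXiv:2407.09362 — 4 statements merged into one kernel-verified Lean document; each statement's English description precedes it below -/
import Mathlib

section
/- For all real r > 0, cosh r · sinh(tanh(r)/2) < sinh r. (Hence the summit of a Saccheri quadrilateral with base tanh r and legs r has length less than 2r.) -/
/-! Since `tanh r < 1`, the argument `tanh r / 2` lies in `(0, 1/2)`, where `sinh x < 2 x`;
hence `cosh r * sinh (tanh r / 2) < cosh r * tanh r = sinh r`. -/

open Real

theorem Real.tanh_pos {x : ℝ} (hx : 0 < x) : 0 < tanh x := by
  rw [tanh_eq_sinh_div_cosh]
  exact div_pos (sinh_pos_iff.2 hx) (cosh_pos x)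

/-- Bracketing `exp` between `1 - x` and `1 / (1 - x)` gives `sinh x < x (2 - x) / (2 (1 - x))`,
which is at most `2 x` exactly when `x ≤ 2/3`. -/
theorem Real.sinh_lt_two_mul {x : ℝ} (hx0 : 0 < x) (hx : x ≤ 2 / 3) : sinh x < 2 * x := by
  have hx1 : 0 < 1 - x := by linarith
  have h_exp : exp x < 1 / (1 - x) := exp_bound_div_one_sub_of_interval' hx0 (by linarith)
  have h_exp_neg : 1 - x < exp (-x) := one_sub_lt_exp_neg hx0.ne'
  have h_bound : 1 / (1 - x) - (1 - x) ≤ 4 * x := by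
    rw [div_sub' hx1.ne', div_le_iff₀ hx1]
    nlinarith
  rw [sinh_eq]
  linarith

theorem cosh_mul_sinh_tanh_half_lt (r : ℝ) (h : 0 < r) :
    cosh r * sinh (tanh r / 2) < sinh r := by
  have h_half : tanh r / 2 ≤ 2 / 3 := by linarith [tanh_lt_one r]
  calc cosh r * sinh (tanh r / 2)
      < cosh r * (2 * (tanh r / 2)) := by
        gcongr
        exact sinh_lt_two_mul (half_pos (tanh_pos h)) h_half
    _ = sinh r := by
        rw [tanh_eq_sinh_div_cosh]
        field_simp
end

section
/- For all real a with 0 ≤ a ≤ 1.8 and all real b ≥ 0, the quantity 2·arctan(tanh(a/2)·tanh(b/2)) is at least (a/5)·min(b, π). -/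
/-!
For `c ≥ 0` the function `x ↦ arctan (c * tanh x)` vanishes at `0` and is concave on `[0, ∞)`,
its derivative `c / (cosh x ^ 2 + c ^ 2 * sinh x ^ 2)` being decreasing there; hence it lies above
its chords through the origin. Using this once in each half-leg, `a / 2 ≤ 9 / 10` and
`min b π / 2 ≤ π / 2`, the area is at least `2 * (a / 1.8) * (min b π / π)` times
`arctan (tanh (9 / 10) * tanh (π / 2))`, and it remains to check that this arctangent is at least
`9 * π / 50`. That follows from `arctan x = π / 4 - arctan ((1 - x) / (1 + x))`, `arctan y ≤ y`, and
lower bounds for `exp` by Taylor partial sums.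
-/

open Real Set

theorem ConcaveOn.mul_map_le_map_mul {f : ℝ → ℝ} (hf : ConcaveOn ℝ (Ici 0) f) (h0 : f 0 = 0)
    {t M : ℝ} (ht0 : 0 ≤ t) (ht1 : t ≤ 1) (hM : 0 ≤ M) : t * f M ≤ f (t * M) := by
  simpa [h0] using hf.2 self_mem_Ici hM (sub_nonneg.2 ht1) ht0 (sub_add_cancel 1 t)

namespace Real

theorem hasDerivAt_tanh (x : ℝ) : HasDerivAt tanh (1 / cosh x ^ 2) x := by
  rw [show tanh = sinh / cosh from funext tanh_eq_sinh_div_cosh]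
  refine ((hasDerivAt_sinh x).div (hasDerivAt_cosh x) (cosh_pos x).ne').congr_deriv ?_
  rw [← sq, ← sq, cosh_sq_sub_sinh_sq]

theorem tanh_strictMono : StrictMono tanh :=
  strictMono_of_deriv_pos fun x ↦ by rw [(hasDerivAt_tanh x).deriv]; positivity

theorem tanh_nonneg {x : ℝ} (hx : 0 ≤ x) : 0 ≤ tanh x := by
  simpa using tanh_strictMono.monotone hx

theorem le_tanh_of_le_exp {c x : ℝ} (hc : c < 1) (h : (1 + c) / (1 - c) ≤ exp (2 * x)) :
    c ≤ tanh x := by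
  have hexp : exp (2 * x) = exp x * exp x := by rw [two_mul, exp_add]
  rw [div_le_iff₀ (by linarith), hexp] at h
  rw [tanh_eq, exp_neg, le_div_iff₀ (by positivity)]
  have hx := exp_pos x
  field_simp
  nlinarith

theorem arctan_le_self {t : ℝ} (ht : 0 ≤ t) : arctan t ≤ t := by
  simpa [tan_arctan] using le_tan (arctan_nonneg.2 ht) (arctan_lt_pi_div_two t)

theorem pi_div_four_sub_le_arctan {x : ℝ} (hx0 : 0 ≤ x) (hx1 : x ≤ 1) :
    π / 4 - (1 - x) / (1 + x) ≤ arctan x := by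
  set y := (1 - x) / (1 + x) with hy_def
  have hy : 0 ≤ y := div_nonneg (by linarith) (by linarith)
  have hxy : x * y < 1 := by
    rw [mul_div_assoc', div_lt_one (by linarith)]; nlinarith
  have hsum : arctan x + arctan y = π / 4 := by
    rw [arctan_add hxy, ← arctan_one]
    congr 1
    rw [div_eq_one_iff_eq (by linarith), hy_def]
    field_simp
    ring
  linarith [arctan_le_self hy]

theorem hasDerivAt_arctan_mul_tanh (c x : ℝ) :
    HasDerivAt (fun x ↦ arctan (c * tanh x)) (c / (cosh x ^ 2 + c ^ 2 * sinh x ^ 2)) x := by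
  convert ((hasDerivAt_tanh x).const_mul c).arctan using 1
  rw [tanh_eq_sinh_div_cosh]
  have := cosh_pos x
  field_simp

theorem concaveOn_arctan_mul_tanh {c : ℝ} (hc : 0 ≤ c) :
    ConcaveOn ℝ (Ici 0) (fun x ↦ arctan (c * tanh x)) := by
  refine AntitoneOn.concaveOn_of_deriv (convex_Ici 0)
    (fun x _ ↦ (hasDerivAt_arctan_mul_tanh c x).continuousAt.continuousWithinAt)
    (fun x _ ↦ (hasDerivAt_arctan_mul_tanh c x).differentiableAt.differentiableWithinAt) ?_
  intro x hx y hy hxy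
  rw [interior_Ici] at hx hy
  rw [(hasDerivAt_arctan_mul_tanh c x).deriv, (hasDerivAt_arctan_mul_tanh c y).deriv]
  have hcosh : cosh x ≤ cosh y := by
    rw [cosh_le_cosh, abs_of_pos hx, abs_of_pos hy]; exact hxy
  have hsinh : sinh x ≤ sinh y := sinh_le_sinh.2 hxy
  have hsinh0 : 0 ≤ sinh x := sinh_nonneg_iff.2 hx.le
  gcongr

theorem mul_arctan_mul_tanh_le {c t X : ℝ} (hc : 0 ≤ c) (ht0 : 0 ≤ t) (ht1 : t ≤ 1)
    (hX : 0 ≤ X) : t * arctan (c * tanh X) ≤ arctan (c * tanh (t * X)) :=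
  (concaveOn_arctan_mul_tanh hc).mul_map_le_map_mul (by simp) ht0 ht1 hX

theorem mul_mul_arctan_tanh_mul_tanh_le {s t X Y : ℝ} (hs0 : 0 ≤ s) (hs1 : s ≤ 1)
    (ht0 : 0 ≤ t) (ht1 : t ≤ 1) (hX : 0 ≤ X) (hY : 0 ≤ Y) :
    s * t * arctan (tanh X * tanh Y) ≤ arctan (tanh (s * X) * tanh (t * Y)) := by
  have hsX : s * arctan (tanh Y * tanh X) ≤ arctan (tanh Y * tanh (s * X)) :=
    mul_arctan_mul_tanh_le (tanh_nonneg hY) hs0 hs1 hX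
  have htY : t * arctan (tanh (s * X) * tanh Y) ≤ arctan (tanh (s * X) * tanh (t * Y)) :=
    mul_arctan_mul_tanh_le (tanh_nonneg (mul_nonneg hs0 hX)) ht0 ht1 hY
  calc s * t * arctan (tanh X * tanh Y) = t * (s * arctan (tanh Y * tanh X)) := by
        rw [mul_comm (tanh X)]; ring
    _ ≤ t * arctan (tanh (s * X) * tanh Y) := by
        rw [mul_comm (tanh (s * X))]; gcongr
    _ ≤ _ := htY

theorem nine_mul_pi_div_fifty_le_arctan :
    9 * π / 50 ≤ arctan (tanh (9 / 10) * tanh (π / 2)) := by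
  have htanh₁ : 0.711 ≤ tanh (9 / 10) := by
    refine le_tanh_of_le_exp (by norm_num) (le_trans ?_ (sum_le_exp_of_nonneg (by norm_num) 6))
    norm_num [Finset.sum_range_succ, Nat.factorial]
  have htanh₂ : 0.9 ≤ tanh (π / 2) := by
    refine le_tanh_of_le_exp (by norm_num) ?_
    rw [mul_div_cancel₀ _ two_ne_zero]
    calc (1 + 0.9) / (1 - 0.9) ≤ ∑ i ∈ Finset.range 8, (3 : ℝ) ^ i / i.factorial := by
          norm_num [Finset.sum_range_succ, Nat.factorial]
      _ ≤ exp 3 := sum_le_exp_of_nonneg (by norm_num) 8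
      _ ≤ exp π := exp_le_exp.2 pi_gt_three.le
  set x := tanh (9 / 10) * tanh (π / 2)
  have hx : 0.6399 ≤ x := by
    calc (0.6399 : ℝ) = 0.711 * 0.9 := by norm_num
      _ ≤ x := mul_le_mul htanh₁ htanh₂ (by norm_num) (by linarith)
  have hx1 : x ≤ 1 :=
    mul_le_one₀ (tanh_lt_one _).le (tanh_nonneg (by positivity)) (tanh_lt_one _).le
  have hquot : (1 - x) / (1 + x) ≤ 0.2196 := by
    rw [div_le_iff₀ (by linarith)]; linarith
  linarith [pi_div_four_sub_le_arctan (by linarith) hx1, pi_gt_d4]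

end Real

theorem triangle_area_lower_bound (a b : ℝ) (ha0 : 0 ≤ a) (ha : a ≤ 1.8) (hb : 0 ≤ b) :
    a / 5 * min b π ≤ 2 * arctan (tanh (a / 2) * tanh (b / 2)) := by
  set m := min b π
  have hm0 : 0 ≤ m := le_min hb pi_pos.le
  have hmb : m ≤ b := min_le_left _ _
  have hmπ : m ≤ π := min_le_right _ _
  calc a / 5 * m = 2 * (a / 1.8 * (m / π) * (9 * π / 50)) := by field_simp; ring
    _ ≤ 2 * (a / 1.8 * (m / π) * arctan (tanh (9 / 10) * tanh (π / 2))) := by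
        gcongr; exact nine_mul_pi_div_fifty_le_arctan
    _ ≤ 2 * arctan (tanh (a / 1.8 * (9 / 10)) * tanh (m / π * (π / 2))) := by
        gcongr
        exact mul_mul_arctan_tanh_mul_tanh_le (by positivity) ((div_le_one (by norm_num)).2 ha)
          (by positivity) ((div_le_one pi_pos).2 hmπ) (by norm_num) (by positivity)
    _ = 2 * arctan (tanh (a / 2) * tanh (m / 2)) := by
        congr 4
        · ring
        · field_simp
    _ ≤ 2 * arctan (tanh (a / 2) * tanh (b / 2)) := by
        gcongr
        · exact tanh_nonneg (by linarith)
        · exact tanh_strictMono.monotone (by linarith)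
end

section
/- For all real x ≥ 0, √(2x) − x^{3/2}/(6√2) ≤ arcosh(1 + x) ≤ √(2x). -/
open Real

/-- The real inverse hyperbolic cosine, `arcosh y = log (y + √(y² − 1))`. -/
noncomputable def arcosh (y : ℝ) : ℝ := Real.log (y + Real.sqrt (y ^ 2 - 1))

/-!
With `s = √(x / 2)` the half-angle formula gives `cosh (2 arsinh s) = 1 + 2 s² = 1 + x`, so
`arcosh (1 + x) = 2 arsinh s`, while `√(2x) = 2 s` and `x^{3/2} / (6√2) = s³ / 3`. The theorem is
therefore `s - s³ / 6 ≤ arsinh s ≤ s` for `s ≥ 0`, the start of the alternating Taylor series of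
`arsinh`. Writing `s = sinh u`, the lower bound says that `sinh³ u / 6 - sinh u + u` is
monotone, which holds because its derivative is `(cosh u - 1)² (cosh u + 2) / 2`.
-/

theorem arcosh_eq_real_arcosh : _root_.arcosh = Real.arcosh := rfl

namespace Real

theorem cosh_two_mul_arsinh (s : ℝ) : cosh (2 * arsinh s) = 1 + 2 * s ^ 2 := by
  rw [cosh_two_mul, cosh_sq, sinh_arsinh]
  ring

theorem arcosh_one_add_eq_two_mul_arsinh {x : ℝ} (hx : 0 ≤ x) :
    arcosh (1 + x) = 2 * arsinh √(x / 2) := by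
  have hs : 0 ≤ arsinh √(x / 2) := arsinh_nonneg_iff.mpr (sqrt_nonneg _)
  rw [← arcosh_cosh (by positivity : 0 ≤ 2 * arsinh √(x / 2)), cosh_two_mul_arsinh,
    sq_sqrt (by positivity)]
  ring_nf

theorem arsinh_le_self {s : ℝ} (hs : 0 ≤ s) : arsinh s ≤ s := by
  simpa only [sinh_arsinh] using self_le_sinh_iff.mpr (arsinh_nonneg_iff.mpr hs)

theorem sinh_sub_self_le {u : ℝ} (hu : 0 ≤ u) : sinh u - u ≤ sinh u ^ 3 / 6 := by
  have hg : ∀ v, HasDerivAt (fun v => sinh v ^ 3 / 6 - sinh v + v)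
      (3 * sinh v ^ 2 * cosh v / 6 - cosh v + 1) v := fun v =>
    (((hasDerivAt_sinh v).pow 3).div_const 6 |>.sub (hasDerivAt_sinh v)).add (hasDerivAt_id v)
  have hmono : Monotone fun v => sinh v ^ 3 / 6 - sinh v + v :=
    monotone_of_deriv_nonneg (fun v => (hg v).differentiableAt) fun v => by
      rw [(hg v).deriv]
      nlinarith [cosh_sq v, one_le_cosh v, sq_nonneg (cosh v - 1)]
  have := hmono hu
  simp only [sinh_zero] at this
  linarith

theorem self_sub_pow_three_div_six_le_arsinh {s : ℝ} (hs : 0 ≤ s) :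
    s - s ^ 3 / 6 ≤ arsinh s := by
  have := sinh_sub_self_le (arsinh_nonneg_iff.mpr hs)
  rw [sinh_arsinh] at this
  linarith

theorem sqrt_two_mul_eq_two_mul_sqrt_half (x : ℝ) : √(2 * x) = 2 * √(x / 2) := by
  rw [show 2 * x = 2 ^ 2 * (x / 2) by ring, sqrt_mul (by norm_num), sqrt_sq (by norm_num)]

theorem rpow_three_halves_div_eq {x : ℝ} (hx : 0 ≤ x) :
    x ^ ((3 : ℝ) / 2) / (6 * √2) = √(x / 2) ^ 3 / 3 := by
  have h2 : √2 ^ 2 = 2 := sq_sqrt (by norm_num)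
  have hx32 : x ^ ((3 : ℝ) / 2) = √x ^ 3 := by
    rw [sqrt_eq_rpow, ← rpow_natCast, ← rpow_mul hx]
    norm_num
  rw [hx32, sqrt_div hx]
  field_simp
  ring_nf
  rw [h2]
  ring

end Real

theorem arcosh_series_bounds (x : ℝ) (hx : 0 ≤ x) :
    Real.sqrt (2 * x) - x ^ ((3 : ℝ) / 2) / (6 * Real.sqrt 2) ≤ _root_.arcosh (1 + x) ∧
    _root_.arcosh (1 + x) ≤ Real.sqrt (2 * x) := by
  have hs : 0 ≤ √(x / 2) := sqrt_nonneg _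
  rw [arcosh_eq_real_arcosh, arcosh_one_add_eq_two_mul_arsinh hx,
    sqrt_two_mul_eq_two_mul_sqrt_half, rpow_three_halves_div_eq hx]
  constructor
  · linarith [self_sub_pow_three_div_six_le_arsinh hs]
  · linarith [arsinh_le_self hs]
end

section
/- Define B : ℕ → ℝ recursively governed by the recursion of balanced separation: for reals n > t ≥ 1 and constant c > 0, suppose B(n) ≤ c√n + max over α ∈ [1/37, 1/2] of (B(αn) + B((1−α)n)) whenever n > t, and B(n) = 0 for t/37 < n ≤ t. Then B(n) < 43c·n/√t − 7c·√n for all n > t/37. -/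
/-!
Write `F(n) = 43c·n/√t − 7c·√n`. On `(t/37, t]` we have `B = 0 < F`, since `√37 < 43/7`. For `n > t`
the linear parts of `F(αn) + F((1−α)n)` add up to that of `F(n)`, while by concavity of `√` the
square-root parts add up to at least `7c√n·s₀`, with `s₀ = √(1/37) + √(36/37) > 1 + 1/7`. The surplus
`7c√n·(s₀ − 1) > c√n` pays for the separator term, and induction on the scale, each piece being at
most `36n/37`, gives `B < F` everywhere above `t/37`.
-/

open Real

theorem forall_gt_of_shrinking_induction {P : ℝ → Prop} {a t q : ℝ} (ht : 0 < t) (hq₀ : 0 < q)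
    (hq : q < 1) (base : ∀ n, a < n → n ≤ t → P n)
    (step : ∀ n, t < n → (∀ m, a < m → m ≤ q * n → P m) → P n) :
    ∀ n, a < n → P n := by
  have bounded : ∀ k : ℕ, ∀ n, a < n → n * q ^ k ≤ t → P n := by
    intro k
    induction k with
    | zero => simpa using base
    | succ k ih =>
      intro n hn hk
      rcases le_or_gt n t with hnt | hnt
      · exact base n hn hnt
      refine step n hnt fun m hm hmq => ih m hm ?_
      calc m * q ^ k ≤ q * n * q ^ k := by gcongr
        _ = n * q ^ (k + 1) := by ring
        _ ≤ t := hk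
  intro n hn
  rcases le_or_gt n t with hnt | hnt
  · exact base n hn hnt
  obtain ⟨k, hk⟩ := exists_pow_lt_of_lt_one (div_pos ht (ht.trans hnt)) hq
  rw [lt_div_iff₀ (ht.trans hnt)] at hk
  exact bounded k n hn (by linarith)

theorem sqrt_add_sqrt_one_sub_le_of_mem {a α : ℝ} (ha : 0 ≤ a) (haα : a ≤ α) (hα : α ≤ 1 - a) :
    √a + √(1 - a) ≤ √α + √(1 - α) := by
  have hprod : √a * √(1 - a) ≤ √α * √(1 - α) := by
    rw [← Real.sqrt_mul ha, ← Real.sqrt_mul (by linarith)]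
    exact Real.sqrt_le_sqrt (by nlinarith)
  have expand : ∀ x : ℝ, 0 ≤ x → x ≤ 1 → (√x + √(1 - x)) ^ 2 = 1 + 2 * (√x * √(1 - x)) := by
    intro x hx₀ hx₁
    rw [add_sq, Real.sq_sqrt hx₀, Real.sq_sqrt (by linarith)]
    ring
  rw [← pow_le_pow_iff_left₀ (by positivity) (by positivity) two_ne_zero,
    expand a ha (by linarith), expand α (by linarith) (by linarith)]
  linarith

theorem one_add_inv_seven_lt_sqrt_add_sqrt : 1 + 1 / 7 < √(1 / 37) + √(36 / 37) := by
  have h36 : √(36 / 37) = 6 * √(1 / 37) := by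
    rw [show (36 / 37 : ℝ) = 6 ^ 2 * (1 / 37) by norm_num, Real.sqrt_mul (by norm_num),
      Real.sqrt_sq (by norm_num)]
  have h1 : 8 / 49 < √(1 / 37) := Real.lt_sqrt (by norm_num) |>.mpr (by norm_num)
  linarith

noncomputable def separatorBound (c t n : ℝ) : ℝ := 43 * c * n / √t - 7 * c * √n

theorem separatorBound_pos {c t n : ℝ} (hc : 0 < c) (ht : 0 < t) (hn : t / 37 < n) :
    0 < separatorBound c t n := by
  have hn₀ : 0 < n := lt_trans (by positivity) hn
  have h37 : √t < √37 * √n := by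
    rw [← Real.sqrt_mul (by norm_num)]
    exact Real.sqrt_lt_sqrt ht.le (by linarith)
  have h43 : √37 < 43 / 7 := Real.sqrt_lt' (by norm_num) |>.mpr (by norm_num)
  have hsn : 0 < c * √n := mul_pos hc (Real.sqrt_pos.mpr hn₀)
  rw [separatorBound, sub_pos, lt_div_iff₀ (Real.sqrt_pos.mpr ht)]
  calc 7 * c * √n * √t < 7 * c * √n * (√37 * √n) := by gcongr
    _ ≤ 7 * c * √n * (43 / 7 * √n) := by gcongr
    _ = 43 * c * (√n * √n) := by ring
    _ = 43 * c * n := by rw [Real.mul_self_sqrt hn₀.le]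

theorem separatorBound_split_le {c t n α : ℝ} (hc : 0 ≤ c) (hα₁ : 1 / 37 ≤ α)
    (hα₂ : α ≤ 1 / 2) :
    separatorBound c t (α * n) + separatorBound c t ((1 - α) * n) ≤
      separatorBound c t n - 7 * c * √n * (√(1 / 37) + √(36 / 37) - 1) := by
  have hconc : √(1 / 37) + √(1 - 1 / 37) ≤ √α + √(1 - α) :=
    sqrt_add_sqrt_one_sub_le_of_mem (by norm_num) hα₁ (by linarith)
  rw [show (1 : ℝ) - 1 / 37 = 36 / 37 by norm_num] at hconc
  have hsn : 0 ≤ 7 * c * √n := by positivity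
  unfold separatorBound
  rw [Real.sqrt_mul (by linarith), Real.sqrt_mul (by linarith)]
  linear_combination mul_le_mul_of_nonneg_left hconc hsn

/-- The separator recursion: if `B n = 0` for `t/37 < n ≤ t` and
`B n ≤ c√n + max_{α ∈ [1/37,1/2]} (B(αn) + B((1-α)n))` for `n > t`, then
`B n < 43c·n/√t − 7c·√n` for all `n > t/37`. -/
theorem separator_recursion (c t : ℝ) (hc : 0 < c) (ht : 1 ≤ t) (B : ℝ → ℝ)
    (hbase : ∀ n : ℝ, t / 37 < n → n ≤ t → B n = 0)
    (hrec : ∀ n : ℝ, t < n →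
      B n ≤ c * Real.sqrt n +
        sSup ((fun α : ℝ => B (α * n) + B ((1 - α) * n)) '' Set.Icc (1 / 37) (1 / 2))) :
    ∀ n : ℝ, t / 37 < n → B n < 43 * c * n / Real.sqrt t - 7 * c * Real.sqrt n := by
  have ht₀ : 0 < t := by linarith
  show ∀ n, t / 37 < n → B n < separatorBound c t n
  refine forall_gt_of_shrinking_induction ht₀ (q := 36 / 37) (by norm_num) (by norm_num)
    (fun n hn hnt => ?_) (fun n hnt ih => ?_)
  · rw [hbase n hn hnt]
    exact separatorBound_pos hc ht₀ hn
  have hn₀ : 0 < n := ht₀.trans hnt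
  have hsup : sSup ((fun α : ℝ => B (α * n) + B ((1 - α) * n)) '' Set.Icc (1 / 37) (1 / 2)) ≤
      separatorBound c t n - 7 * c * √n * (√(1 / 37) + √(36 / 37) - 1) := by
    refine csSup_le ((Set.nonempty_Icc.mpr (by norm_num)).image _) ?_
    rintro _ ⟨α, ⟨hα₁, hα₂⟩, rfl⟩
    have hA := ih (α * n) (by nlinarith) (by nlinarith)
    have hB := ih ((1 - α) * n) (by nlinarith) (by nlinarith)
    linarith [separatorBound_split_le (t := t) (n := n) hc.le hα₁ hα₂]
  have hgap : c * √n < 7 * c * √n * (√(1 / 37) + √(36 / 37) - 1) := by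
    nlinarith [one_add_inv_seven_lt_sqrt_add_sqrt, mul_pos hc (Real.sqrt_pos.mpr hn₀)]
  linarith [hrec n hnt]
end
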